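/- If X and Y are real normed spaces, f : X → Y is uniformly continuous, and g : X → ℝ is defined by g(x) = ‖f(x)‖/(1 + ‖x‖), then g is bounded on X. -/

import Mathlib

open AffineMap Finset

theorem dist_apply_le_nat_mul_of_forall_dist_le {E α : Type*} [NormedAddCommGroup E]
    [NormedSpace ℝ E] [PseudoMetricSpace α] {f : E → α} {δ ε : ℝ}
    (h : ∀ u v, dist u v ≤ δ → dist (f u) (f v) ≤ ε) (n : ℕ) {x y : E}
    (hxy : dist x y ≤ n * δ) : dist (f x) (f y) ≤ n * ε := by
  rcases eq_or_ne n 0 with rfl | hn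
  · obtain rfl : x = y := dist_le_zero.mp (by simpa using hxy)
    simp
  have hn' : (0 : ℝ) < n := by positivity
  -- Cut the segment from `x` to `y` into `n` pieces of length at most `δ`.
  let p : ℕ → E := fun k => lineMap x y ((k : ℝ) / n)
  have hstep : ∀ k, dist (p k) (p (k + 1)) ≤ δ := by
    intro k
    have : dist ((k : ℝ) / n) ((k + 1 : ℕ) / n) = 1 / n := by
      rw [Real.dist_eq, Nat.cast_succ, ← sub_div, abs_div, sub_add_cancel_left, abs_neg,
        abs_one, abs_of_pos hn']
    simp only [p, dist_lineMap_lineMap, this]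
    rwa [div_mul_eq_mul_div, one_mul, div_le_iff₀ hn', mul_comm]
  calc dist (f x) (f y) = dist (f (p 0)) (f (p n)) := by simp [p, hn]
    _ ≤ ∑ k ∈ range n, dist (f (p k)) (f (p (k + 1))) := dist_le_range_sum_dist (f ∘ p) n
    _ ≤ ∑ _k ∈ range n, ε := sum_le_sum fun k _ => h _ _ (hstep k)
    _ = n * ε := by simp

theorem UniformContinuous.exists_dist_le_mul_add_one {E α : Type*} [NormedAddCommGroup E]
    [NormedSpace ℝ E] [PseudoMetricSpace α] {f : E → α} (hf : UniformContinuous f) :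
    ∃ C, ∀ x y, dist (f x) (f y) ≤ C * dist x y + 1 := by
  obtain ⟨δ, hδ, h⟩ := Metric.uniformContinuous_iff_le.mp hf 1 one_pos
  refine ⟨δ⁻¹, fun x y => ?_⟩
  set n := ⌈dist x y / δ⌉₊
  have hle : dist x y ≤ n * δ := (div_le_iff₀ hδ).mp (Nat.le_ceil _)
  have hlt : (n : ℝ) < δ⁻¹ * dist x y + 1 := by
    rw [inv_mul_eq_div]; exact Nat.ceil_lt_add_one (by positivity)
  have := dist_apply_le_nat_mul_of_forall_dist_le (fun u v huv => h huv) n hle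
  linarith

theorem stmt5_general {X Y : Type*} [NormedAddCommGroup X] [NormedSpace ℝ X]
    [NormedAddCommGroup Y] (f : X → Y)
    (hf : UniformContinuous f) (g : X → ℝ) (hg : ∀ x, g x = ‖f x‖ / (1 + ‖x‖)) :
    ∃ C : ℝ, ∀ x : X, g x ≤ C := by
  obtain ⟨C, hC⟩ := hf.exists_dist_le_mul_add_one
  refine ⟨max (‖f 0‖ + 1) C, fun x => ?_⟩
  have hfx : ‖f x‖ ≤ ‖f 0‖ + 1 + C * ‖x‖ := by
    have := hC x 0
    rw [dist_zero_right] at this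
    linarith [norm_le_norm_add_norm_sub' (f x) (f 0), dist_eq_norm (f x) (f 0)]
  rw [hg, div_le_iff₀ (by positivity)]
  calc ‖f x‖ ≤ ‖f 0‖ + 1 + C * ‖x‖ := hfx
    _ ≤ max (‖f 0‖ + 1) C + max (‖f 0‖ + 1) C * ‖x‖ := by
      gcongr
      exacts [le_max_left _ _, le_max_right _ _]
    _ = max (‖f 0‖ + 1) C * (1 + ‖x‖) := by ring

theorem stmt5 {X Y : Type*} [NormedAddCommGroup X] [NormedSpace ℝ X]
    [NormedAddCommGroup Y] [NormedSpace ℝ Y] (f : X → Y)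
    (hf : UniformContinuous f) (g : X → ℝ) (hg : ∀ x, g x = ‖f x‖ / (1 + ‖x‖)) :
    ∃ C : ℝ, ∀ x : X, g x ≤ C :=
  stmt5_general f hf g hg
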